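/- arXiv:2104.11131 — 3 statements merged into one kernel-verified Lean document; each statement's English description precedes it below -/
import Mathlib

section
/- If θ₁ ≠ 0, θ₂ ≠ 0, θ₁ ≠ θ₂, β₁₂ ≠ β₂₂ and θ₂ ∉ {β₁₂, β₂₂}, then the set of Poisson ratios ν ∈ (−1, 1/2] for which the system α₁₁θ₁ + (α₁₂+α₂₂)θ₂ = 0, α₁₁θ₁² + (α₁₂+α₂₂)θ₂² = 1, α₁₂(θ₂−β₁₂) + α₂₂(θ₂−β₂₂) = 0, α₁₁θ₁² + α₁₂β₁₂² + α₂₂β₂₂² = 3(1−ν)/(1+ν) admits a real solution (α₁₁, α₁₂, α₂₂) contains at most one element. -/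
/-- Type (1,2) power-law stored energy functions do not exist: the set of
Poisson ratios for which the system is solvable has at most one element. -/
theorem stmt_1 (θ1 θ2 β12 β22 : ℝ)
    (hθ1 : θ1 ≠ 0) (hθ2 : θ2 ≠ 0) (hθ12 : θ1 ≠ θ2) (hβ : β12 ≠ β22)
    (hθβ1 : θ2 ≠ β12) (hθβ2 : θ2 ≠ β22) :
    Set.Subsingleton {ν : ℝ | ν ∈ Set.Ioc (-1 : ℝ) (1 / 2) ∧
      ∃ α11 α12 α22 : ℝ,
        α11 * θ1 + (α12 + α22) * θ2 = 0 ∧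
        α11 * θ1 ^ 2 + (α12 + α22) * θ2 ^ 2 = 1 ∧
        α12 * (θ2 - β12) + α22 * (θ2 - β22) = 0 ∧
        α11 * θ1 ^ 2 + α12 * β12 ^ 2 + α22 * β22 ^ 2 = 3 * (1 - ν) / (1 + ν)} := by
  rintro ν ⟨⟨hν1, hν2⟩, a11, a12, a22, h1, h2, h3, h4⟩
    ν' ⟨⟨hν1', hν2'⟩, b11, b12, b22, g1, g2, g3, g4⟩
  -- uniqueness of the triple
  have ha : a11 = b11 ∧ a12 = b12 ∧ a22 = b22 := by
    set a := a11 - b11 with ha_def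
    set b := a12 - b12 with hb_def
    set c := a22 - b22 with hc_def
    have e1 : a * θ1 + (b + c) * θ2 = 0 := by simp only [ha_def, hb_def, hc_def]; linear_combination h1 - g1
    have e2 : a * θ1 ^ 2 + (b + c) * θ2 ^ 2 = 0 := by
      simp only [ha_def, hb_def, hc_def]; linear_combination h2 - g2
    have e3 : b * (θ2 - β12) + c * (θ2 - β22) = 0 := by
      simp only [hb_def, hc_def]; linear_combination h3 - g3
    have ha0 : a = 0 := by
      have key : a * θ1 * (θ2 - θ1) = 0 := by linear_combination θ2 * e1 - e2
      have h12 : θ2 - θ1 ≠ 0 := sub_ne_zero.mpr (Ne.symm hθ12)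
      rcases mul_eq_zero.mp key with h | h
      · rcases mul_eq_zero.mp h with h | h
        · exact h
        · exact absurd h hθ1
      · exact absurd h h12
    have hbc : b + c = 0 := by
      have : (b + c) * θ2 = 0 := by linear_combination e1 - θ1 * ha0
      exact (mul_eq_zero.mp this).resolve_right hθ2
    have hb0 : b = 0 := by
      have hc' : c = -b := by linarith
      have : b * (β22 - β12) = 0 := by linear_combination e3 - (θ2 - β22) * hc'
      have hβ' : β22 - β12 ≠ 0 := sub_ne_zero.mpr (Ne.symm hβ)
      exact (mul_eq_zero.mp this).resolve_right hβ'
    have hc0 : c = 0 := by linarith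
    refine ⟨by linarith [sub_eq_zero.mp ha0], by linarith [sub_eq_zero.mp hb0],
      by linarith [sub_eq_zero.mp hc0]⟩
  obtain ⟨e11, e12, e22⟩ := ha
  have heq : 3 * (1 - ν) / (1 + ν) = 3 * (1 - ν') / (1 + ν') := by
    rw [← h4, ← g4, e11, e12, e22]
  have hp : (0:ℝ) < 1 + ν := by linarith
  have hp' : (0:ℝ) < 1 + ν' := by linarith
  have : 3 * (1 - ν) * (1 + ν') = 3 * (1 - ν') * (1 + ν) := by
    field_simp at heq; linarith [heq]
  nlinarith [this, hp, hp']
end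

section
/- For the quasi-linear Signorini model, whenever ν ∈ (−1, 1/2], δ_c > 0, and the central pressure 3(δ_c^{2/3}−1)(3δ_c^{2/3}+8ν+5)/(16(1+ν)) is positive, the hyperbolicity quantity 3(5δ_c^{2/3} − 4ν − 1)/(4(1+ν)δ_c^{1/3}) is also positive. -/
/-- Quasi-linear Signorini: positivity of the central pressure implies
hyperbolicity at the center. -/
theorem stmt_18 (ν δc : ℝ) (hν : ν ∈ Set.Ioc (-1 : ℝ) (1 / 2)) (hδ : 0 < δc)
    (hp : 0 < 3 * (δc ^ ((2 : ℝ) / 3) - 1) * (3 * δc ^ ((2 : ℝ) / 3) + 8 * ν + 5) /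
      (16 * (1 + ν))) :
    0 < 3 * (5 * δc ^ ((2 : ℝ) / 3) - 4 * ν - 1) / (4 * (1 + ν) * δc ^ ((1 : ℝ) / 3)) := by
  obtain ⟨h1, h2⟩ := hν
  have hν1 : (0:ℝ) < 1 + ν := by linarith
  set x := δc ^ ((2:ℝ)/3) with hx
  have hxpos : 0 < x := Real.rpow_pos_of_pos hδ _
  have hy : 0 < δc ^ ((1:ℝ)/3) := Real.rpow_pos_of_pos hδ _
  have hp' : 0 < (x - 1) * (3 * x + 8 * ν + 5) := by
    rcases div_pos_iff.mp hp with ⟨a, _⟩ | ⟨_, b⟩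
    · nlinarith
    · nlinarith
  have key : 0 < 5 * x - 4 * ν - 1 := by
    rcases lt_trichotomy x 1 with h | h | h
    · nlinarith
    · nlinarith
    · nlinarith
  apply div_pos (by linarith) (by positivity)
end

section
/- Suppose a self-similar profile δ(r) = c·r^α with c > 0 and α > −3, α ≠ 0, solves the static equation, where the coefficients satisfy â(δ, (3/(3+α))δ) = â(1, 3/(3+α))·(3/(3+α))^θ·δ^θ and similarly for b̂ (homogeneity of degree θ). Then matching powers of δ in â(δ,η)·α·δ/r − b̂(δ,η)·(η−δ)/r + (4πG/3)𝒦²·r·η·δ = 0 with η = (3/(3+α))δ forces θ = 1 + 2/α, i.e., α = 2/(θ−1), and hence θ ∉ [1/3, 1]. -/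
/-!
Writing `x = c r^α`, the two coefficient terms scale like `x^θ · x / r`, i.e. like `r^(α(θ+1) - 1)`,
while the gravitational term scales like `r · x²`, i.e. like `r^(2α+1)`. The gravitational
coefficient is nonzero, so the equation can hold for every `r > 0` only if the two exponents agree:
`α(θ+1) = 2α + 2`, i.e. `θ = 1 + 2/α`. For `α > 0` this gives `θ > 1`, and for `-3 < α < 0` it
gives `θ < 1/3`.
-/

open Real

lemma rpow_exponents_eq_of_forall_pos {A B p q : ℝ} (hB : B ≠ 0)
    (h : ∀ r : ℝ, 0 < r → A * r ^ p + B * r ^ q = 0) : p = q := by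
  have hAB : A = -B := by simpa [eq_neg_iff_add_eq_zero] using h 1 one_pos
  have h2 : B * ((2 : ℝ) ^ q - (2 : ℝ) ^ p) = 0 := by
    linear_combination h 2 two_pos - (2 : ℝ) ^ p * hAB
  have hpow : (2 : ℝ) ^ p = (2 : ℝ) ^ q := by
    linarith [(mul_eq_zero.mp h2).resolve_left hB]
  exact (rpow_right_inj two_pos (by norm_num)).mp hpow

lemma one_add_two_div_notMem_Icc {α : ℝ} (hα3 : -3 < α) (hα0 : α ≠ 0) :
    1 + 2 / α ∉ Set.Icc (1 / 3 : ℝ) 1 := by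
  rintro ⟨hlo, hhi⟩
  rcases hα0.lt_or_gt with hneg | hpos
  · have : 2 / α < -2 / 3 := by
      rw [div_lt_iff_of_neg hneg]
      linarith
    linarith
  · linarith [div_pos two_pos hpos]

/-- `r` times the static equation for `δ = c r^α`, `η = k δ`, `C = 4πG𝒦²/3`. -/
lemma self_similar_residual_mul {θ α c a1 b1 k C r : ℝ} (hc : 0 < c) (hr : 0 < r) :
    r * (a1 * k ^ θ * (c * r ^ α) ^ θ * α * (c * r ^ α) / r
      - b1 * k ^ θ * (c * r ^ α) ^ θ * (k * (c * r ^ α) - c * r ^ α) / r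
      + C * r * (k * (c * r ^ α)) * (c * r ^ α))
      = (a1 * α - b1 * (k - 1)) * k ^ θ * c ^ (θ + 1) * r ^ (α * (θ + 1))
        + C * k * c ^ 2 * r ^ (2 * α + 2) := by
  have hx : 0 < c * r ^ α := mul_pos hc (rpow_pos_of_pos hr α)
  have hxθ : (c * r ^ α) ^ θ * (c * r ^ α) = c ^ (θ + 1) * r ^ (α * (θ + 1)) := by
    rw [← rpow_add_one hx.ne', mul_rpow hc.le (rpow_pos_of_pos hr α).le, ← rpow_mul hr.le]
  have hr2 : r ^ (2 * α + 2) = (r ^ α) ^ 2 * r ^ 2 := by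
    rw [rpow_add hr, mul_comm (2 : ℝ) α, rpow_mul hr.le]
    norm_cast
  calc _ = (a1 * α - b1 * (k - 1)) * k ^ θ * ((c * r ^ α) ^ θ * (c * r ^ α))
          + C * k * c ^ 2 * ((r ^ α) ^ 2 * r ^ 2) := by
        field_simp
    _ = _ := by rw [hxθ, hr2]; ring

theorem stmt_19_general (θ α c a1 b1 G K : ℝ) (hc : 0 < c) (hα3 : -3 < α) (hα0 : α ≠ 0)
    (hG : 0 < G) (hK : 0 < K)
    (heq : ∀ r : ℝ, 0 < r →
      a1 * (3 / (3 + α)) ^ θ * (c * r ^ α) ^ θ * α * (c * r ^ α) / r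
      - b1 * (3 / (3 + α)) ^ θ * (c * r ^ α) ^ θ *
          ((3 / (3 + α)) * (c * r ^ α) - c * r ^ α) / r
      + (4 * Real.pi * G / 3) * K ^ 2 * r * ((3 / (3 + α)) * (c * r ^ α)) *
          (c * r ^ α) = 0) :
    θ = 1 + 2 / α ∧ θ ∉ Set.Icc (1 / 3 : ℝ) 1 := by
  have hk : (0 : ℝ) < 3 / (3 + α) := div_pos three_pos (by linarith)
  have hgrav : 4 * π * G / 3 * K ^ 2 * (3 / (3 + α)) * c ^ 2 ≠ 0 := by positivity
  have hexp : α * (θ + 1) = 2 * α + 2 := by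
    refine rpow_exponents_eq_of_forall_pos hgrav fun r hr ↦
      (self_similar_residual_mul (a1 := a1) (b1 := b1) hc hr).symm.trans ?_
    rw [heq r hr, mul_zero]
  have hθ : θ = 1 + 2 / α := by
    field_simp
    linear_combination hexp
  exact ⟨hθ, hθ ▸ one_add_two_div_notMem_Icc hα3 hα0⟩

/-- Self-similar solutions force θ = 1 + 2/α, hence θ ∉ [1/3, 1]. -/
theorem stmt_19 (θ α c a1 b1 G K : ℝ) (hc : 0 < c) (hα3 : -3 < α) (hα0 : α ≠ 0)
    (ha1 : a1 ≠ 0) (hG : 0 < G) (hK : 0 < K)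
    (heq : ∀ r : ℝ, 0 < r →
      a1 * (3 / (3 + α)) ^ θ * (c * r ^ α) ^ θ * α * (c * r ^ α) / r
      - b1 * (3 / (3 + α)) ^ θ * (c * r ^ α) ^ θ *
          ((3 / (3 + α)) * (c * r ^ α) - c * r ^ α) / r
      + (4 * Real.pi * G / 3) * K ^ 2 * r * ((3 / (3 + α)) * (c * r ^ α)) *
          (c * r ^ α) = 0) :
    θ = 1 + 2 / α ∧ θ ∉ Set.Icc (1 / 3 : ℝ) 1 :=
  stmt_19_general θ α c a1 b1 G K hc hα3 hα0 hG hK heq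
end
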